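/- arXiv:2311.11113 — 3 statements merged into one kernel-verified Lean document; each statement's English description precedes it below -/
import Mathlib

section
/- The quartic polynomial Φ(t) = t^4 + (16√3/15)t^3 - (2/5)t^2 - (16√3/15)t + 23/30 is strictly positive for all real t. -/
theorem stmt_0 :
    ∀ t : ℝ,
      0 < t ^ 4 + (16 * Real.sqrt 3 / 15) * t ^ 3 - (2 / 5) * t ^ 2
          - (16 * Real.sqrt 3 / 15) * t + 23 / 30 := by
  intro t
  have hs : Real.sqrt 3 ^ 2 = 3 := Real.sq_sqrt (by norm_num)
  nlinarith [sq_nonneg (t^2 + (8*Real.sqrt 3/15)*t - 17/20),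
    sq_nonneg (67*t - 12*Real.sqrt 3), Real.sqrt_nonneg 3]
end

section
/- The quartic polynomial ψ(t) = t^4 + (32/5)t^3 + 24t^2 - 32t - 2 has exactly one positive real root and exactly one negative real root, and every negative root lies in the open interval (-1, 0). -/
lemma psi_key (a b : ℝ) (hab : a < b) (hs : 0 < a * b)
    (ha : a ^ 4 + (32 / 5) * a ^ 3 + 24 * a ^ 2 - 32 * a - 2 = 0)
    (hb : b ^ 4 + (32 / 5) * b ^ 3 + 24 * b ^ 2 - 32 * b - 2 = 0) : False := by
  have hQ : 0 < a ^ 2 + a * b + b ^ 2 + (32 / 5) * (a + b) + 24 := by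
    nlinarith [sq_nonneg (a + b + 64 / 15), sq_nonneg (a - b)]
  have h2 : (2 : ℝ) * (b - a) =
      -(a * b) * ((b - a) * (a ^ 2 + a * b + b ^ 2 + (32 / 5) * (a + b) + 24)) := by
    linear_combination a * hb - b * ha
  nlinarith [mul_pos hs (mul_pos (sub_pos.2 hab) hQ)]

lemma psi_cont : Continuous fun t : ℝ => t ^ 4 + (32 / 5) * t ^ 3 + 24 * t ^ 2 - 32 * t - 2 := by
  continuity

lemma psi_unique {a b : ℝ} (hs : 0 < a * b)
    (ha : a ^ 4 + (32 / 5) * a ^ 3 + 24 * a ^ 2 - 32 * a - 2 = 0)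
    (hb : b ^ 4 + (32 / 5) * b ^ 3 + 24 * b ^ 2 - 32 * b - 2 = 0) : a = b := by
  rcases lt_trichotomy a b with h | h | h
  · exact absurd (psi_key a b h hs ha hb) (by simp)
  · exact h
  · exact absurd (psi_key b a h (by linarith [mul_comm a b]) hb ha) (by simp)

theorem stmt_7 :
    {t : ℝ | 0 < t ∧ t ^ 4 + (32 / 5) * t ^ 3 + 24 * t ^ 2 - 32 * t - 2 = 0}.ncard = 1 ∧
    {t : ℝ | t < 0 ∧ t ^ 4 + (32 / 5) * t ^ 3 + 24 * t ^ 2 - 32 * t - 2 = 0}.ncard = 1 ∧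
    ∀ t : ℝ, t < 0 → t ^ 4 + (32 / 5) * t ^ 3 + 24 * t ^ 2 - 32 * t - 2 = 0 →
      -1 < t ∧ t < 0 := by
  set f : ℝ → ℝ := fun t => t ^ 4 + (32 / 5) * t ^ 3 + 24 * t ^ 2 - 32 * t - 2 with hf
  -- positive root exists in [1, 2]
  have hpos : ∃ c : ℝ, 0 < c ∧ f c = 0 := by
    have h0 : (0 : ℝ) ∈ Set.Icc (f 1) (f 2) := by
      constructor <;> simp [hf] <;> norm_num
    obtain ⟨c, hc1, hc2⟩ := intermediate_value_Icc (by norm_num : (1:ℝ) ≤ 2)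
      (psi_cont.continuousOn) h0
    exact ⟨c, by linarith [hc1.1], hc2⟩
  -- negative root exists in [-1, 0]
  have hneg : ∃ c : ℝ, c < 0 ∧ f c = 0 := by
    have h0 : (0 : ℝ) ∈ Set.Icc (f 0) (f (-1)) := by
      constructor <;> simp [hf] <;> norm_num
    obtain ⟨c, hc1, hc2⟩ := intermediate_value_Icc' (by norm_num : (-1:ℝ) ≤ 0)
      (psi_cont.continuousOn) h0
    refine ⟨c, lt_of_le_of_ne hc1.2 ?_, hc2⟩
    intro h; rw [h] at hc2; norm_num [hf] at hc2
  obtain ⟨p, hp, hpf⟩ := hpos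
  obtain ⟨n, hn, hnf⟩ := hneg
  refine ⟨?_, ?_, ?_⟩
  · rw [Set.ncard_eq_one]
    refine ⟨p, Set.eq_singleton_iff_unique_mem.2 ⟨⟨hp, hpf⟩, ?_⟩⟩
    rintro x ⟨hx, hxf⟩
    exact psi_unique (mul_pos hx hp) hxf hpf
  · rw [Set.ncard_eq_one]
    refine ⟨n, Set.eq_singleton_iff_unique_mem.2 ⟨⟨hn, hnf⟩, ?_⟩⟩
    rintro x ⟨hx, hxf⟩
    exact psi_unique (mul_pos_of_neg_of_neg hx hn) hxf hnf
  · intro t ht htf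
    refine ⟨?_, ht⟩
    by_contra h
    push_neg at h
    -- t ≤ -1, show f t > 0
    nlinarith [sq_nonneg (t ^ 2 + 16 / 5 * t), sq_nonneg t, sq_nonneg (t + 1)]
end

section
/- If A² ∈ (8/9, 1), then the two points ((-λA² ∓ λA√(9A²-8))/2, 0) are real, distinct critical points of the function f from the previous context. -/
/-- The polynomial `f` with parameters `A`, `λ`. -/
noncomputable def f (A lam x y : ℝ) : ℝ :=
  (1 / 4) * x ^ 4 - (1 / 2) * A * x ^ 2 * y ^ 2 + (1 / 4) * y ^ 4
    + (-2 * lam ^ 3 * A ^ 4 * (1 - A ^ 2)) * x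
    + (1 / 2) * (lam ^ 2 * A ^ 2 * (2 - 3 * A ^ 2)) * x ^ 2
    + (1 / 2) * (A ^ 3 * (2 - A ^ 2) * lam ^ 2) * y ^ 2
    + (-A * (1 - A ^ 2) * lam) * x * y ^ 2

/-!
On the axis `y = 0` the `x`-derivative of `f` is the cubic
`x³ + λ²A²(2 - 3A²) x - 2λ³A⁴(1 - A²) = (x - λA²)(x² + λA² x + 2λ²A²(1 - A²))`,
and the two points are the roots of the quadratic factor, whose discriminant is
`λ²A²(9A² - 8) > 0`. The `y`-derivative vanishes on the axis because `f` is even in `y`.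
-/

open Real

theorem Function.Even.deriv_zero {F : Type*} [NormedAddCommGroup F] [NormedSpace ℝ F]
    {g : ℝ → F} (hg : Function.Even g) : deriv g 0 = 0 := by
  have h := deriv_comp_neg g (0 : ℝ)
  rw [show (fun x => g (-x)) = g from funext hg, neg_zero] at h
  have h2 : (2 : ℝ) • deriv g 0 = 0 := by rw [two_smul]; nth_rewrite 1 [h]; exact neg_add_cancel _
  exact (smul_eq_zero.1 h2).resolve_left two_ne_zero

lemma f_even_right (A lam x : ℝ) : Function.Even (f A lam x) := fun y => by
  unfold f; ring

lemma hasDerivAt_f_left_zero (A lam x : ℝ) :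
    HasDerivAt (fun x => f A lam x 0)
      ((x - lam * A ^ 2) * (x ^ 2 + lam * A ^ 2 * x + 2 * lam ^ 2 * A ^ 2 * (1 - A ^ 2))) x := by
  have hfun : (fun x => f A lam x 0) = fun x => (1 / 4) * x ^ 4
      + (-2 * lam ^ 3 * A ^ 4 * (1 - A ^ 2)) * x
      + (1 / 2) * (lam ^ 2 * A ^ 2 * (2 - 3 * A ^ 2)) * x ^ 2 := by
    funext x; simp only [f]; ring
  rw [hfun]
  refine ((((hasDerivAt_pow 4 x).const_mul _).add ((hasDerivAt_id x).const_mul _)).add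
    ((hasDerivAt_pow 2 x).const_mul _)).congr_deriv ?_
  push_cast; ring

lemma quadratic_factor_eq_zero {A lam s : ℝ} (hdisc : 0 ≤ 9 * A ^ 2 - 8)
    (hs : s = (-lam * A ^ 2 - lam * A * √(9 * A ^ 2 - 8)) / 2 ∨
      s = (-lam * A ^ 2 + lam * A * √(9 * A ^ 2 - 8)) / 2) :
    s ^ 2 + lam * A ^ 2 * s + 2 * lam ^ 2 * A ^ 2 * (1 - A ^ 2) = 0 := by
  rcases hs with rfl | rfl <;> linear_combination (lam * A) ^ 2 / 4 * mul_self_sqrt hdisc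

theorem stmt_13 (A lam : ℝ) (hA : 8 / 9 < A ^ 2 ∧ A ^ 2 < 1) (hlam : 0 < lam) :
    ((-lam * A ^ 2 - lam * A * Real.sqrt (9 * A ^ 2 - 8)) / 2 ≠
      (-lam * A ^ 2 + lam * A * Real.sqrt (9 * A ^ 2 - 8)) / 2) ∧
    (∀ s : ℝ, s = (-lam * A ^ 2 - lam * A * Real.sqrt (9 * A ^ 2 - 8)) / 2 ∨
        s = (-lam * A ^ 2 + lam * A * Real.sqrt (9 * A ^ 2 - 8)) / 2 →
      deriv (fun x => f A lam x 0) s = 0 ∧ deriv (fun y => f A lam s y) 0 = 0) := by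
  have hdisc : 0 < 9 * A ^ 2 - 8 := by linarith [hA.1]
  have hA0 : A ≠ 0 := by rintro rfl; norm_num at hA
  have hroot_gap : lam * A * √(9 * A ^ 2 - 8) ≠ 0 :=
    mul_ne_zero (mul_ne_zero hlam.ne' hA0) (sqrt_pos.2 hdisc).ne'
  refine ⟨fun h => hroot_gap (by linarith), fun s hs => ⟨?_, (f_even_right A lam s).deriv_zero⟩⟩
  rw [(hasDerivAt_f_left_zero A lam s).deriv, quadratic_factor_eq_zero hdisc.le hs, mul_zero]
end
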